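/- If M ⊂ ℝ^d (d ≥ 2) is a smooth convex body, i.e., each boundary point of M belongs to exactly one supporting hyperplane, then X(M) = d. -/

import Mathlib

open scoped RealInnerProductSpace

def IsXRayed {d : ℕ} (K : Set (EuclideanSpace ℝ (Fin d)))
    (v p : EuclideanSpace ℝ (Fin d)) : Prop :=
  ∃ t : ℝ, p + t • v ∈ interior K

noncomputable def xrayNumber {d : ℕ} (K : Set (EuclideanSpace ℝ (Fin d))) : ℕ :=
  sInf {n | ∃ D : Finset (EuclideanSpace ℝ (Fin d)), D.card = n ∧ (∀ v ∈ D, v ≠ 0) ∧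
    ∀ p ∈ K, ∃ v ∈ D, IsXRayed K v p}

/-- `n` is an outer unit normal of a supporting hyperplane of `K` at `b`. -/
def IsOuterUnitNormalAt {d : ℕ} (K : Set (EuclideanSpace ℝ (Fin d)))
    (b n : EuclideanSpace ℝ (Fin d)) : Prop :=
  ‖n‖ = 1 ∧ ∀ x ∈ K, ⟪n, x⟫ ≤ ⟪n, b⟫

/-!
If fewer than `d` directions are given, some `u ≠ 0` is orthogonal to all of them. At a point of
`M` maximising `⟪u, ·⟫`, every line in one of these directions lies in the supporting hyperplane
`⟪u, ·⟫ = max`, which misses the interior; so `X(M) ≥ d`.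

Conversely, a line through a boundary point `p` that misses the interior can be separated from the
interior by a hyperplane; this hyperplane supports `M` at `p` and contains the line. By smoothness
its normal is the unique normal `n` at `p`, so the line is orthogonal to `n`. As `n ≠ 0`, some
vector of the standard basis is not orthogonal to `n`, and the `d` basis directions X-ray `M`.
-/

section InnerProductSpace

variable {E : Type*} [NormedAddCommGroup E] [InnerProductSpace ℝ E]

lemma exists_ne_zero_forall_inner_eq_zero_of_card_lt_finrank [FiniteDimensional ℝ E]
    (s : Finset E) (hs : s.card < Module.finrank ℝ E) :
    ∃ u ≠ 0, ∀ v ∈ s, ⟪u, v⟫ = 0 := by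
  have hspan : Submodule.span ℝ (s : Set E) ≠ ⊤ := fun htop ↦ by
    have := finrank_span_finset_le_card (R := ℝ) s
    rw [Set.finrank, htop, finrank_top] at this
    omega
  obtain ⟨u, hu, hu0⟩ := Submodule.exists_mem_ne_zero_of_ne_bot
    (mt Submodule.orthogonal_eq_bot_iff.mp hspan)
  exact ⟨u, hu0, fun v hv ↦ Submodule.inner_left_of_mem_orthogonal (Submodule.subset_span hv) hu⟩

lemma inner_lt_of_isMaxOn_of_mem_interior {K : Set E} {u p x : E} (hu : u ≠ 0)
    (hmax : IsMaxOn (fun y ↦ ⟪u, y⟫) K p) (hx : x ∈ interior K) : ⟪u, x⟫ < ⟪u, p⟫ := by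
  refine (hmax (interior_subset hx)).lt_of_ne fun hxp ↦ hu ?_
  have hloc : IsLocalMax (fun y ↦ ⟪u, y⟫) x :=
    IsMaxOn.isLocalMax (fun y hy ↦ hxp ▸ hmax hy) (mem_interior_iff_mem_nhds.mp hx)
  have := hloc.hasFDerivAt_eq_zero (innerSL ℝ u).hasFDerivAt
  simpa using congr($this u)

lemma Convex.exists_isMaxOn_inner_of_line_notMem_interior [CompleteSpace E] {M : Set E}
    (hMconv : Convex ℝ M) (hMint : (interior M).Nonempty) {p v : E} (hp : p ∈ M)
    (hline : ∀ t : ℝ, p + t • v ∉ interior M) :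
    ∃ w ≠ 0, IsMaxOn (fun x ↦ ⟪w, x⟫) M p ∧ ⟪w, v⟫ = 0 := by
  have hLconv : Convex ℝ (Set.range fun t : ℝ ↦ p + t • v) := by
    rintro _ ⟨t₁, rfl⟩ _ ⟨t₂, rfl⟩ a b - - hab
    obtain rfl : b = 1 - a := by linarith
    exact ⟨a * t₁ + (1 - a) * t₂, by module⟩
  have hdisj : Disjoint (interior M) (Set.range fun t : ℝ ↦ p + t • v) :=
    Set.disjoint_right.mpr (by rintro _ ⟨t, rfl⟩; exact hline t)
  obtain ⟨f, u, hf0, hfM, hfL⟩ := geometric_hahn_banach_of_nonempty_interior hMconv hLconv hdisj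
    hMint ⟨p, 0, by simp⟩
  have hfp : f p = u := le_antisymm (hfM p hp) (by simpa using hfL p ⟨0, by simp⟩)
  -- a linear functional bounded below on a line is constant along it
  have hfv : f v = 0 := by
    by_contra h
    have := hfL _ ⟨(u - f p - 1) / f v, rfl⟩
    rw [map_add, map_smul, smul_eq_mul, div_mul_cancel₀ _ h] at this
    linarith
  refine ⟨(InnerProductSpace.toDual ℝ E).symm f, by simpa using hf0, fun x hx ↦ ?_, ?_⟩
  · simpa [InnerProductSpace.toDual_symm_apply, hfp] using hfM x hx
  · rw [InnerProductSpace.toDual_symm_apply, hfv]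

end InnerProductSpace

section XRay

variable {d : ℕ} {M : Set (EuclideanSpace ℝ (Fin d))}

lemma isOuterUnitNormalAt_inv_norm_smul {p w : EuclideanSpace ℝ (Fin d)} (hw : w ≠ 0)
    (hmax : IsMaxOn (fun x ↦ ⟪w, x⟫) M p) : IsOuterUnitNormalAt M p (‖w‖⁻¹ • w) := by
  refine ⟨norm_smul_inv_norm hw, fun x hx ↦ ?_⟩
  simp only [real_inner_smul_left]
  exact mul_le_mul_of_nonneg_left (hmax hx) (by positivity)

lemma isXRayed_of_mem_interior {p : EuclideanSpace ℝ (Fin d)} (hp : p ∈ interior M)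
    (v : EuclideanSpace ℝ (Fin d)) : IsXRayed M v p :=
  ⟨0, by simpa using hp⟩

lemma not_isXRayed_of_isMaxOn_inner {u p v : EuclideanSpace ℝ (Fin d)} (hu : u ≠ 0)
    (hmax : IsMaxOn (fun x ↦ ⟪u, x⟫) M p) (huv : ⟪u, v⟫ = 0) : ¬ IsXRayed M v p := by
  rintro ⟨t, ht⟩
  have := inner_lt_of_isMaxOn_of_mem_interior hu hmax ht
  simp [inner_add_right, real_inner_smul_right, huv] at this

lemma isXRayed_of_inner_ne_zero (hMconv : Convex ℝ M) (hMint : (interior M).Nonempty)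
    {p n v : EuclideanSpace ℝ (Fin d)} (hp : p ∈ M)
    (hn : ∀ m, IsOuterUnitNormalAt M p m → m = n) (hnv : ⟪n, v⟫ ≠ 0) : IsXRayed M v p := by
  by_contra hnx
  obtain ⟨w, hw0, hmax, hwv⟩ := hMconv.exists_isMaxOn_inner_of_line_notMem_interior
    hMint hp fun t ht ↦ hnx ⟨t, ht⟩
  rw [← hn _ (isOuterUnitNormalAt_inv_norm_smul hw0 hmax), real_inner_smul_left, hwv,
    mul_zero] at hnv
  exact hnv rfl

lemma exists_isXRayed_of_smooth {ι : Type*} [Fintype ι] [Nonempty ι]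
    (b : OrthonormalBasis ι ℝ (EuclideanSpace ℝ (Fin d)))
    (hMconv : Convex ℝ M) (hMint : (interior M).Nonempty)
    (hsmooth : ∀ q ∈ frontier M, ∃! n, IsOuterUnitNormalAt M q n)
    {p : EuclideanSpace ℝ (Fin d)} (hp : p ∈ M) : ∃ i, IsXRayed M (b i) p := by
  by_cases hpi : p ∈ interior M
  · exact ⟨Classical.arbitrary ι, isXRayed_of_mem_interior hpi _⟩
  obtain ⟨n, hn, hn_unique⟩ := hsmooth p ⟨subset_closure hp, hpi⟩
  obtain ⟨i, hi⟩ : ∃ i, ⟪n, b i⟫ ≠ 0 := by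
    by_contra! h
    have : n = 0 := by simpa [real_inner_comm, h] using (b.sum_repr' n).symm
    simpa [this] using hn.1
  exact ⟨i, isXRayed_of_inner_ne_zero hMconv hMint hp hn_unique hi⟩

lemma le_card_of_forall_isXRayed (hMc : IsCompact M) (hMne : M.Nonempty)
    {D : Finset (EuclideanSpace ℝ (Fin d))} (hD : ∀ p ∈ M, ∃ v ∈ D, IsXRayed M v p) :
    d ≤ D.card := by
  by_contra! hlt
  obtain ⟨u, hu0, huD⟩ := exists_ne_zero_forall_inner_eq_zero_of_card_lt_finrank D
    (by rwa [finrank_euclideanSpace_fin])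
  obtain ⟨p, hp, hmax⟩ := hMc.exists_isMaxOn hMne
    (continuous_const.inner continuous_id : Continuous fun x ↦ ⟪u, x⟫).continuousOn
  obtain ⟨v, hv, hpv⟩ := hD p hp
  exact not_isXRayed_of_isMaxOn_inner hu0 hmax (huD v hv) hpv

lemma xrayNumber_le_card (D : Finset (EuclideanSpace ℝ (Fin d))) (hD0 : ∀ v ∈ D, v ≠ 0)
    (hD : ∀ p ∈ M, ∃ v ∈ D, IsXRayed M v p) : xrayNumber M ≤ D.card :=
  Nat.sInf_le ⟨D, rfl, hD0, hD⟩

lemma le_xrayNumber {n : ℕ} (hcover : ∃ D : Finset (EuclideanSpace ℝ (Fin d)),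
      (∀ v ∈ D, v ≠ 0) ∧ ∀ p ∈ M, ∃ v ∈ D, IsXRayed M v p)
    (hn : ∀ D : Finset (EuclideanSpace ℝ (Fin d)),
      (∀ p ∈ M, ∃ v ∈ D, IsXRayed M v p) → n ≤ D.card) :
    n ≤ xrayNumber M := by
  obtain ⟨D, hD0, hD⟩ := hcover
  exact le_csInf ⟨_, D, rfl, hD0, hD⟩ (by rintro _ ⟨D', rfl, -, hD'⟩; exact hn D' hD')

end XRay

theorem xray_number_of_smooth {d : ℕ} (hd : 2 ≤ d)
    (M : Set (EuclideanSpace ℝ (Fin d)))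
    (hMc : IsCompact M) (hMconv : Convex ℝ M) (hMint : (interior M).Nonempty)
    (hsmooth : ∀ b ∈ frontier M, ∃! n, IsOuterUnitNormalAt M b n) :
    xrayNumber M = d := by
  have : Nonempty (Fin d) := ⟨⟨0, by omega⟩⟩
  set b := EuclideanSpace.basisFun (Fin d) ℝ
  set D := Finset.univ.image b
  have hD0 : ∀ v ∈ D, v ≠ 0 := by
    simpa [D] using b.orthonormal.ne_zero
  have hD : ∀ p ∈ M, ∃ v ∈ D, IsXRayed M v p := fun p hp ↦ by
    obtain ⟨i, hi⟩ := exists_isXRayed_of_smooth b hMconv hMint hsmooth hp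
    exact ⟨b i, Finset.mem_image_of_mem b (Finset.mem_univ i), hi⟩
  have hDcard : D.card = d := by
    rw [Finset.card_image_of_injective _ b.orthonormal.linearIndependent.injective,
      Finset.card_univ, Fintype.card_fin]
  refine le_antisymm ((xrayNumber_le_card D hD0 hD).trans_eq hDcard) ?_
  exact le_xrayNumber ⟨D, hD0, hD⟩ fun D' hD' ↦
    le_card_of_forall_isXRayed hMc (hMint.mono interior_subset) hD'
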